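/- arXiv:1805.04995 — 3 statements merged into one kernel-verified Lean document; each statement's English description precedes it below -/
import Mathlib

section
/- Let m, n be integers. An element (a,b) of the variant C_Z^{m,n} satisfies (a,b) *_{m,n} (a,b) = (a,b) if and only if (a,b) = (n+i, m+i) for some non-negative integer i. -/
/-- The extended bicyclic semigroup operation on ℤ × ℤ. -/
def emul (x y : ℤ × ℤ) : ℤ × ℤ :=
  if x.2 < y.1 then (x.1 - x.2 + y.1, y.2)
  else if x.2 = y.1 then (x.1, y.2)
  else (x.1, y.2 + x.2 - y.1)

/-- The variant (sandwich) operation on ℤ × ℤ with sandwich element (m, n). -/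
def vmul (m n : ℤ) (x y : ℤ × ℤ) : ℤ × ℤ := emul (emul x (m, n)) y

/-
The three cases of the multiplication collapse to one formula with `max`. Applying it twice
shows that `(a, b)` is idempotent in the variant exactly when `a - b = n - m` and
`max a n = a`.
-/

theorem emul_eq_max (x y : ℤ × ℤ) :
    emul x y = (x.1 - x.2 + max x.2 y.1, y.2 - y.1 + max x.2 y.1) := by
  unfold emul
  split_ifs <;> ext <;> simp only <;> omega

theorem vmul_self (m n a b : ℤ) :
    vmul m n (a, b) (a, b) =
      (a - b + m - n + max (n - m + max b m) a, b - a + max (n - m + max b m) a) := by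
  simp only [vmul, emul_eq_max, Prod.mk.injEq, and_true]
  ring

theorem exists_nat_shift_iff (m n a b : ℤ) :
    (∃ i : ℕ, a = n + i ∧ b = m + i) ↔ n ≤ a ∧ a - n = b - m := by
  constructor
  · rintro ⟨i, rfl, rfl⟩
    omega
  · rintro ⟨hna, hshift⟩
    exact ⟨(a - n).toNat, by omega, by omega⟩

theorem variant_idempotents (m n a b : ℤ) :
    vmul m n (a, b) (a, b) = (a, b) ↔ ∃ i : ℕ, a = n + i ∧ b = m + i := by
  rw [vmul_self, Prod.mk.injEq, exists_nat_shift_iff]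
  omega
end

section
/- Let m, n be integers. Two elements (a,b), (c,d) of the variant C_Z^{m,n} are L-equivalent if and only if b = d and (a = c or (a ≥ n and c ≥ n)). -/
lemma emul_eq (x y : ℤ × ℤ) :
    emul x y = (x.1 + max (y.1 - x.2) 0, y.2 + max (x.2 - y.1) 0) := by
  unfold emul
  split_ifs <;> simp only [Prod.ext_iff] <;> omega

lemma exists_vmul_eq_iff (m n : ℤ) (s p : ℤ × ℤ) :
    (∃ z : ℤ × ℤ, vmul m n z s = p) ↔ s.2 + max (n - s.1) 0 ≤ p.2 := by
  simp only [vmul, emul_eq, Prod.ext_iff]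
  constructor
  · rintro ⟨z, -, hz⟩
    omega
  · intro hp
    -- the left factor `emul z (m, n) = (p.1, s.1 + (p.2 - s.2))` has second coordinate `≥ n`
    exact ⟨(p.1, m + s.1 + (p.2 - s.2) - n), by omega, by omega⟩

theorem variant_L_relation (m n a b c d : ℤ) :
    ({p : ℤ × ℤ | p = (a, b) ∨ ∃ z : ℤ × ℤ, vmul m n z (a, b) = p}
      = {p : ℤ × ℤ | p = (c, d) ∨ ∃ z : ℤ × ℤ, vmul m n z (c, d) = p})
    ↔ (b = d ∧ (a = c ∨ (n ≤ a ∧ n ≤ c))) := by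
  simp only [Set.ext_iff, Set.mem_ofPred_eq, exists_vmul_eq_iff]
  simp only [Prod.ext_iff]
  constructor
  · intro h
    have hab := (h (a, b)).mp (Or.inl ⟨rfl, rfl⟩)
    have hcd := (h (c, d)).mpr (Or.inl ⟨rfl, rfl⟩)
    dsimp only at hab hcd
    omega
  · rintro ⟨rfl, rfl | ⟨ha, hc⟩⟩ p
    · rfl
    · omega
end

section
/- The variant C_Z^{0,0} is not finitely generated: for every finite subset F of C_Z^{0,0}, the subsemigroup generated by F omits infinitely many elements (x,y) with x < 0 and y < 0. -/
/-- Membership in the subsemigroup of the variant C_Z^{0,0} generated by F. -/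
inductive InGenV (F : Set (ℤ × ℤ)) : ℤ × ℤ → Prop
  | base {x : ℤ × ℤ} : x ∈ F → InGenV F x
  | mul {x y : ℤ × ℤ} : InGenV F x → InGenV F y → InGenV F (vmul 0 0 x y)

/-!
Multiplying in the extended bicyclic semigroup never decreases the first coordinate of the left
factor or the second coordinate of the right factor. Hence `min p.1 p.2` of a product is at least
the least such value among the factors, so the subsemigroup generated by a finite set is bounded
below in both coordinates, and it misses every diagonal point `(k, k)` with `k` below that bound.
-/

lemma fst_le_emul_fst (x y : ℤ × ℤ) : x.1 ≤ (emul x y).1 := by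
  unfold emul
  split_ifs <;> dsimp only <;> omega

lemma snd_le_emul_snd (x y : ℤ × ℤ) : y.2 ≤ (emul x y).2 := by
  unfold emul
  split_ifs <;> dsimp only <;> omega

lemma min_le_vmul (m n : ℤ) (x y : ℤ × ℤ) :
    min (min x.1 x.2) (min y.1 y.2) ≤ min (vmul m n x y).1 (vmul m n x y).2 := by
  have hfst : x.1 ≤ (vmul m n x y).1 :=
    (fst_le_emul_fst x (m, n)).trans (fst_le_emul_fst _ y)
  have hsnd : y.2 ≤ (vmul m n x y).2 := snd_le_emul_snd _ y
  omega

lemma InGenV.le_min {F : Set (ℤ × ℤ)} {N : ℤ} (hF : ∀ f ∈ F, N ≤ min f.1 f.2)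
    {p : ℤ × ℤ} (hp : InGenV F p) : N ≤ min p.1 p.2 := by
  induction hp with
  | base hx => exact hF _ hx
  | mul _ _ ihx ihy => exact (_root_.le_min ihx ihy).trans (min_le_vmul 0 0 _ _)

theorem variant_not_finitely_generated (F : Finset (ℤ × ℤ)) :
    {p : ℤ × ℤ | p.1 < 0 ∧ p.2 < 0 ∧ ¬ InGenV (↑F) p}.Infinite := by
  obtain ⟨N, hN⟩ := (F.image fun f => min f.1 f.2).bddBelow
  have hF : ∀ f ∈ (F : Set (ℤ × ℤ)), N ≤ min f.1 f.2 :=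
    fun f hf => hN (Finset.mem_image_of_mem _ hf)
  have hdiag : (fun k : ℤ => (k, k)) '' Set.Iio (min N 0) ⊆
      {p : ℤ × ℤ | p.1 < 0 ∧ p.2 < 0 ∧ ¬ InGenV (↑F) p} := by
    rintro _ ⟨k, hk, rfl⟩
    obtain ⟨hkN, hk0⟩ := lt_min_iff.mp (Set.mem_Iio.mp hk)
    refine ⟨hk0, hk0, fun hgen => ?_⟩
    have hNk : N ≤ min k k := hgen.le_min hF
    rw [min_self] at hNk
    omega
  refine Set.Infinite.mono hdiag ((Set.Iio_infinite _).image ?_)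
  exact fun a _ b _ hab => congrArg Prod.fst hab
end
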